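/- arXiv:1707.08319 — 2 statements merged into one kernel-verified Lean document; each statement's English description precedes it below -/
import Mathlib

section
/- Let n ≥ 2 and define φ(t,x) = ∫_{S^{n-1}} e^{x·ω − t} dω for (t,x) ∈ ℝ × ℝⁿ. Then there exist constants 0 < c ≤ C such that c (1+|x|)^{-(n-1)/2} e^{|x|−t} ≤ φ(t,x) ≤ C (1+|x|)^{-(n-1)/2} e^{|x|−t} for all t ∈ ℝ and x ∈ ℝⁿ. -/
open Real MeasureTheory

/-- `φ(t,x) = ∫_{S^{n-1}} e^{x·ω − t} dω`, where the sphere carries the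
`(n-1)`-dimensional Hausdorff (surface) measure. -/
noncomputable def phiFn (n : ℕ) (t : ℝ) (x : EuclideanSpace ℝ (Fin n)) : ℝ :=
  ∫ ω in Metric.sphere (0 : EuclideanSpace ℝ (Fin n)) 1,
    Real.exp ((inner ℝ x ω : ℝ) - t) ∂(μH[(n : ℝ) - 1])

/-!
On the unit sphere the cap `{ω | ⟪e, ω⟫ ≥ 1 - δ}` has `(n-1)`-dimensional measure comparable
to `δ ^ ((n-1)/2)`: after rotating `e` to the last basis vector, dropping the last coordinate
maps the cap onto a ball of radius comparable to `√δ`, by a `1`-Lipschitz map whose inverse is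
`2`-Lipschitz when `δ ≤ 1/4`. Write `x = r e` with `‖e‖ = 1`. On the cap of width `1/(1+r)`
the integrand `e^{⟪x, ω⟫}` is at least `e^{r-1}`, which gives the lower bound. For the upper
bound, the band where `r - ⟪x, ω⟫ ∈ [j, j+1)` lies in the cap of width `3(j+1)/(1+r)` and
carries `e^{⟪x, ω⟫} ≤ e^{r-j}`, so summing over `j` costs only the convergent series
`∑ e^{-j} (j+1)^{(n-1)/2}`.
-/

open Metric Set Filter Topology
open scoped NNReal ENNReal RealInnerProductSpace

section Cap

variable {E : Type*} [NormedAddCommGroup E] [InnerProductSpace ℝ E]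

def sphereCap (e : E) (δ : ℝ) : Set E :=
  {ω ∈ sphere (0 : E) 1 | 1 - δ ≤ ⟪e, ω⟫}

lemma sphereCap_subset_sphere (e : E) (δ : ℝ) : sphereCap e δ ⊆ sphere 0 1 :=
  fun _ hω => hω.1

lemma image_sphereCap (R : E ≃ₗᵢ[ℝ] E) (e : E) (δ : ℝ) :
    R '' sphereCap e δ = sphereCap (R e) δ := by
  ext ω
  rw [R.image_eq_preimage_symm]
  simp only [sphereCap, mem_preimage, mem_ofPred_eq, mem_sphere_zero_iff_norm,
    LinearIsometryEquiv.norm_map]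
  rw [← R.inner_map_map, R.apply_symm_apply]

lemma hausdorffMeasure_sphereCap_congr [MeasurableSpace E] [BorelSpace E] (d : ℝ)
    {e e' : E} (h : ‖e‖ = ‖e'‖) (δ : ℝ) :
    μH[d] (sphereCap e δ) = μH[d] (sphereCap e' δ) := by
  set R := Submodule.reflection (ℝ ∙ (e - e'))ᗮ
  rw [← Submodule.reflection_sub h, ← image_sphereCap R]
  exact (R.toIsometryEquiv.hausdorffMeasure_image d _).symm

lemma sphereCap_mem_nhdsWithin {ω : E} (hω : ω ∈ sphere (0 : E) 1) {δ : ℝ} (hδ : 0 < δ) :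
    sphereCap ω δ ∈ 𝓝[sphere 0 1] ω := by
  have hωω : ⟪ω, ω⟫ = 1 := by
    rw [real_inner_self_eq_norm_sq, mem_sphere_zero_iff_norm.mp hω, one_pow]
  have hopen : IsOpen {ω' : E | 1 - δ < ⟪ω, ω'⟫} :=
    isOpen_lt continuous_const (continuous_const.inner continuous_id)
  refine mem_of_superset (inter_mem_nhdsWithin _ (hopen.mem_nhds ?_))
    fun ω' hω' => ⟨hω'.1, hω'.2.le⟩
  change 1 - δ < ⟪ω, ω⟫
  linarith

end Cap

lemma abs_sqrt_one_sub_sq_sub_le {p q : ℝ} (hp : p ^ 2 ≤ 1 / 2) (hq : q ^ 2 ≤ 1 / 2) :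
    |√(1 - p ^ 2) - √(1 - q ^ 2)| ≤ |p - q| := by
  set A := √(1 - p ^ 2)
  set B := √(1 - q ^ 2)
  have hA : A ^ 2 = 1 - p ^ 2 := sq_sqrt (by linarith)
  have hB : B ^ 2 = 1 - q ^ 2 := sq_sqrt (by linarith)
  have hAB : 1 / 2 ≤ A * B := by
    nlinarith [mul_nonneg (sqrt_nonneg (1 - p ^ 2)) (sqrt_nonneg (1 - q ^ 2))]
  -- `(A - B)(A + B) = (q - p)(q + p)`, where `(A + B)^2 ≥ 2 ≥ (p + q)^2`
  have hprod : (A - B) ^ 2 * (A + B) ^ 2 = (p - q) ^ 2 * (p + q) ^ 2 := by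
    linear_combination (A ^ 2 - B ^ 2 + q ^ 2 - p ^ 2) * (hA - hB)
  rw [← sq_le_sq]
  nlinarith [sq_nonneg (A - B), sq_nonneg (p - q), sq_nonneg (p + q)]

section Coordinates

variable {m : ℕ}

noncomputable def northPole : EuclideanSpace ℝ (Fin (m + 1)) := EuclideanSpace.single (Fin.last m) 1

def dropLast (ω : EuclideanSpace ℝ (Fin (m + 1))) : EuclideanSpace ℝ (Fin m) :=
  WithLp.toLp 2 fun i => ω i.castSucc

noncomputable def graphLift (v : EuclideanSpace ℝ (Fin m)) : EuclideanSpace ℝ (Fin (m + 1)) :=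
  WithLp.toLp 2 (Fin.snoc (α := fun _ => ℝ) v (√(1 - ‖v‖ ^ 2)))

lemma inner_northPole (ω : EuclideanSpace ℝ (Fin (m + 1))) :
    ⟪northPole, ω⟫ = ω (Fin.last m) := by
  simp [northPole, EuclideanSpace.inner_single_left]

lemma norm_sq_eq_norm_sq_dropLast_add (ω : EuclideanSpace ℝ (Fin (m + 1))) :
    ‖ω‖ ^ 2 = ‖dropLast ω‖ ^ 2 + ω (Fin.last m) ^ 2 := by
  simp [EuclideanSpace.norm_sq_eq, Fin.sum_univ_castSucc, dropLast]

lemma dropLast_sub (ω ω' : EuclideanSpace ℝ (Fin (m + 1))) :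
    dropLast (ω - ω') = dropLast ω - dropLast ω' := rfl

lemma lipschitzWith_dropLast : LipschitzWith 1 (dropLast (m := m)) := by
  refine LipschitzWith.of_dist_le_mul fun ω ω' => ?_
  rw [dist_eq_norm, dist_eq_norm, NNReal.coe_one, one_mul, ← dropLast_sub]
  refine le_of_sq_le_sq ?_ (norm_nonneg _)
  rw [norm_sq_eq_norm_sq_dropLast_add (ω - ω')]
  nlinarith

@[simp]
lemma dropLast_graphLift (v : EuclideanSpace ℝ (Fin m)) : dropLast (graphLift v) = v := by
  ext i
  simp [dropLast, graphLift]

@[simp]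
lemma graphLift_last (v : EuclideanSpace ℝ (Fin m)) :
    graphLift v (Fin.last m) = √(1 - ‖v‖ ^ 2) := by
  simp [graphLift]

lemma norm_graphLift (v : EuclideanSpace ℝ (Fin m)) (hv : ‖v‖ ≤ 1) : ‖graphLift v‖ = 1 := by
  have h : ‖graphLift v‖ ^ 2 = 1 := by
    rw [norm_sq_eq_norm_sq_dropLast_add, dropLast_graphLift, graphLift_last,
      sq_sqrt (by nlinarith [norm_nonneg v])]
    ring
  exact (pow_eq_one_iff_of_nonneg (norm_nonneg _) two_ne_zero).mp h

lemma graphLift_dropLast {ω : EuclideanSpace ℝ (Fin (m + 1))} (hω : ‖ω‖ = 1)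
    (hlast : 0 ≤ ω (Fin.last m)) : graphLift (dropLast ω) = ω := by
  have hsq : 1 - ‖dropLast ω‖ ^ 2 = ω (Fin.last m) ^ 2 := by
    rw [← one_pow 2, ← hω, norm_sq_eq_norm_sq_dropLast_add]; ring
  ext i
  induction i using Fin.lastCases with
  | last => rw [graphLift_last, hsq, sqrt_sq hlast]
  | cast i => simp [graphLift, dropLast]


lemma lipschitzOnWith_graphLift :
    LipschitzOnWith 2 (graphLift (m := m)) {v | ‖v‖ ^ 2 ≤ 1 / 2} := by
  refine LipschitzOnWith.of_dist_le_mul fun v hv w hw => ?_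
  rw [dist_eq_norm, dist_eq_norm]
  have hlast : (graphLift v - graphLift w) (Fin.last m) = √(1 - ‖v‖ ^ 2) - √(1 - ‖w‖ ^ 2) := by
    simp
  refine le_of_sq_le_sq ?_ (by positivity)
  rw [norm_sq_eq_norm_sq_dropLast_add, dropLast_sub, dropLast_graphLift, dropLast_graphLift,
    hlast, ← sq_abs (√_ - _)]
  have h1 := (abs_sqrt_one_sub_sq_sub_le hv hw).trans (abs_norm_sub_norm_le v w)
  push_cast
  nlinarith [abs_nonneg (√(1 - ‖v‖ ^ 2) - √(1 - ‖w‖ ^ 2)), norm_nonneg (v - w)]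

lemma closedBall_subset_dropLast_image_sphereCap {δ : ℝ} (hδ₀ : 0 ≤ δ) (hδ₁ : δ ≤ 1) :
    closedBall (0 : EuclideanSpace ℝ (Fin m)) √δ ⊆ dropLast '' sphereCap northPole δ := by
  intro v hv
  rw [mem_closedBall_zero_iff, le_sqrt (norm_nonneg v) hδ₀] at hv
  refine ⟨graphLift v, ⟨?_, ?_⟩, dropLast_graphLift v⟩
  · rw [mem_sphere_zero_iff_norm]
    exact norm_graphLift v (by nlinarith [norm_nonneg v])
  · rw [inner_northPole, graphLift_last, le_sqrt (by linarith) (by linarith)]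
    nlinarith

lemma sphereCap_northPole_subset_graphLift_image {δ : ℝ} (hδ₀ : 0 ≤ δ) (hδ₁ : δ ≤ 1) :
    sphereCap (northPole (m := m)) δ ⊆ graphLift '' closedBall 0 √(2 * δ) := by
  rintro ω ⟨hω, hcap⟩
  rw [mem_sphere_zero_iff_norm] at hω
  rw [inner_northPole] at hcap
  refine ⟨dropLast ω, ?_, graphLift_dropLast hω (by linarith)⟩
  have hsq := norm_sq_eq_norm_sq_dropLast_add ω
  rw [hω] at hsq
  rw [mem_closedBall_zero_iff, le_sqrt (norm_nonneg _) (by linarith)]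
  nlinarith

end Coordinates

lemma exists_hausdorffMeasure_closedBall_eq (m : ℕ) : ∃ b : ℝ, 0 < b ∧ ∀ ρ : ℝ, 0 ≤ ρ →
    μH[m] (closedBall (0 : EuclideanSpace ℝ (Fin m)) ρ) = ENNReal.ofReal (b * ρ ^ m) := by
  have hHaar : (μH[m] : Measure (EuclideanSpace ℝ (Fin m))).IsAddHaarMeasure := by
    simpa using isAddHaarMeasure_hausdorffMeasure (E := EuclideanSpace ℝ (Fin m))
  set β := (μH[m] : Measure (EuclideanSpace ℝ (Fin m))) (closedBall 0 1)
  have hβ₀ : 0 < β := measure_closedBall_pos _ _ one_pos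
  have hβ : β ≠ ⊤ := (isCompact_closedBall _ _).measure_lt_top.ne
  refine ⟨β.toReal, ENNReal.toReal_pos hβ₀.ne' hβ, fun ρ hρ => ?_⟩
  rw [Measure.addHaar_closedBall' _ _ hρ, finrank_euclideanSpace_fin, mul_comm,
    ENNReal.ofReal_mul ENNReal.toReal_nonneg, ENNReal.ofReal_toReal hβ]

lemma sqrt_pow_eq_rpow {δ : ℝ} (hδ : 0 ≤ δ) (m : ℕ) : √δ ^ m = δ ^ ((m : ℝ) / 2) := by
  rw [Real.sqrt_eq_rpow, ← rpow_mul_natCast hδ]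
  ring_nf

lemma norm_northPole (m : ℕ) : ‖(northPole : EuclideanSpace ℝ (Fin (m + 1)))‖ = 1 := by
  simp [northPole]

lemma exists_le_hausdorffMeasure_sphereCap (m : ℕ) : ∃ k : ℝ, 0 < k ∧
    ∀ e : EuclideanSpace ℝ (Fin (m + 1)), ‖e‖ = 1 → ∀ δ : ℝ, 0 < δ → δ ≤ 1 →
      ENNReal.ofReal (k * δ ^ ((m : ℝ) / 2)) ≤ μH[m] (sphereCap e δ) := by
  obtain ⟨b, hb, hball⟩ := exists_hausdorffMeasure_closedBall_eq m
  refine ⟨b, hb, fun e he δ hδ₀ hδ₁ => ?_⟩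
  rw [hausdorffMeasure_sphereCap_congr _ (he.trans (norm_northPole m).symm)]
  calc ENNReal.ofReal (b * δ ^ ((m : ℝ) / 2))
      = μH[m] (closedBall (0 : EuclideanSpace ℝ (Fin m)) √δ) := by
        rw [hball _ (sqrt_nonneg δ), sqrt_pow_eq_rpow hδ₀.le]
    _ ≤ μH[m] (dropLast '' sphereCap northPole δ) :=
        measure_mono (closedBall_subset_dropLast_image_sphereCap hδ₀.le hδ₁)
    _ ≤ μH[m] (sphereCap northPole δ) := by
        simpa using lipschitzWith_dropLast.hausdorffMeasure_image_le (Nat.cast_nonneg m) _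

lemma exists_hausdorffMeasure_sphereCap_le_of_le_quarter (m : ℕ) : ∃ K : ℝ, 0 ≤ K ∧
    ∀ e : EuclideanSpace ℝ (Fin (m + 1)), ‖e‖ = 1 → ∀ δ : ℝ, 0 ≤ δ → δ ≤ 1 / 4 →
      μH[m] (sphereCap e δ) ≤ ENNReal.ofReal (K * δ ^ ((m : ℝ) / 2)) := by
  obtain ⟨b, hb, hball⟩ := exists_hausdorffMeasure_closedBall_eq m
  refine ⟨2 ^ m * b * 2 ^ ((m : ℝ) / 2), by positivity, fun e he δ hδ₀ hδ => ?_⟩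
  rw [hausdorffMeasure_sphereCap_congr _ (he.trans (norm_northPole m).symm)]
  have hlip : LipschitzOnWith 2 graphLift (closedBall (0 : EuclideanSpace ℝ (Fin m)) √(2 * δ)) :=
    lipschitzOnWith_graphLift.mono fun v hv => by
      rw [mem_closedBall_zero_iff, le_sqrt (norm_nonneg v) (by linarith)] at hv
      change ‖v‖ ^ 2 ≤ 1 / 2
      linarith
  calc μH[m] (sphereCap northPole δ)
      ≤ μH[m] (graphLift '' closedBall (0 : EuclideanSpace ℝ (Fin m)) √(2 * δ)) :=
        measure_mono (sphereCap_northPole_subset_graphLift_image hδ₀ (by linarith))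
    _ ≤ (2 : ℝ≥0) ^ (m : ℝ) * μH[m] (closedBall (0 : EuclideanSpace ℝ (Fin m)) √(2 * δ)) :=
        hlip.hausdorffMeasure_image_le (Nat.cast_nonneg m)
    _ = ENNReal.ofReal (2 ^ m * b * 2 ^ ((m : ℝ) / 2) * δ ^ ((m : ℝ) / 2)) := by
        have h2 : ((2 : ℝ≥0) : ℝ≥0∞) ^ (m : ℝ) = ENNReal.ofReal (2 ^ m) := by
          rw [ENNReal.rpow_natCast, ENNReal.ofReal_pow zero_le_two, ENNReal.ofReal_ofNat]
          rfl
        rw [hball _ (sqrt_nonneg _), sqrt_pow_eq_rpow (by linarith), mul_rpow zero_le_two hδ₀, h2,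
          ← ENNReal.ofReal_mul (by positivity)]
        ring_nf

lemma hausdorffMeasure_sphere_lt_top (m : ℕ) :
    μH[m] (sphere (0 : EuclideanSpace ℝ (Fin (m + 1))) 1) < ⊤ := by
  obtain ⟨K, -, hcap⟩ := exists_hausdorffMeasure_sphereCap_le_of_le_quarter m
  refine (isCompact_sphere _ _).measure_lt_top_of_nhdsWithin fun ω hω =>
    ⟨sphereCap ω (1 / 4), sphereCap_mem_nhdsWithin hω (by norm_num), ?_⟩
  exact (hcap ω (mem_sphere_zero_iff_norm.mp hω) _ (by norm_num) le_rfl).trans_lt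
    ENNReal.ofReal_lt_top

lemma exists_hausdorffMeasure_sphereCap_le (m : ℕ) : ∃ K : ℝ, 0 ≤ K ∧
    ∀ e : EuclideanSpace ℝ (Fin (m + 1)), ‖e‖ = 1 → ∀ δ : ℝ, 0 < δ →
      μH[m] (sphereCap e δ) ≤ ENNReal.ofReal (K * δ ^ ((m : ℝ) / 2)) := by
  obtain ⟨K, hK, hcap⟩ := exists_hausdorffMeasure_sphereCap_le_of_le_quarter m
  set T := (μH[m] (sphere (0 : EuclideanSpace ℝ (Fin (m + 1))) 1)).toReal
  have hT : 0 ≤ T := ENNReal.toReal_nonneg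
  refine ⟨K + 4 ^ ((m : ℝ) / 2) * T, by positivity, fun e he δ hδ => ?_⟩
  have hδm : 0 ≤ δ ^ ((m : ℝ) / 2) := by positivity
  rcases le_or_gt δ (1 / 4) with hsmall | hlarge
  · refine (hcap e he δ hδ.le hsmall).trans (ENNReal.ofReal_le_ofReal ?_)
    gcongr
    exact le_add_of_nonneg_right (by positivity)
  · have hone : 1 ≤ 4 ^ ((m : ℝ) / 2) * δ ^ ((m : ℝ) / 2) := by
      rw [← mul_rpow (by norm_num) hδ.le]
      exact one_le_rpow (by linarith) (by positivity)
    calc μH[m] (sphereCap e δ) ≤ μH[m] (sphere (0 : EuclideanSpace ℝ (Fin (m + 1))) 1) :=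
          measure_mono (sphereCap_subset_sphere e δ)
      _ = ENNReal.ofReal T := (ENNReal.ofReal_toReal (hausdorffMeasure_sphere_lt_top m).ne).symm
      _ ≤ ENNReal.ofReal ((K + 4 ^ ((m : ℝ) / 2) * T) * δ ^ ((m : ℝ) / 2)) := by
          refine ENNReal.ofReal_le_ofReal ?_
          nlinarith [mul_nonneg hK hδm]

lemma setLIntegral_ofReal_exp_sub_le_tsum {X : Type*} [MeasurableSpace X] (μ : Measure X)
    {s : Set X} {g : X → ℝ} (hg : ∀ x ∈ s, 0 ≤ g x) (a : ℝ) :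
    ∫⁻ x in s, ENNReal.ofReal (exp (a - g x)) ∂μ ≤
      ∑' j : ℕ, ENNReal.ofReal (exp (a - j)) * μ (s ∩ g ⁻¹' Iio (j + 1)) := by
  have hcover : s ⊆ ⋃ j : ℕ, s ∩ g ⁻¹' Ico (j : ℝ) (j + 1) := fun x hx =>
    mem_iUnion.mpr ⟨⌊g x⌋₊, hx, Nat.floor_le (hg x hx), Nat.lt_floor_add_one _⟩
  calc ∫⁻ x in s, ENNReal.ofReal (exp (a - g x)) ∂μ
      ≤ ∫⁻ x in ⋃ j : ℕ, s ∩ g ⁻¹' Ico (j : ℝ) (j + 1), ENNReal.ofReal (exp (a - g x)) ∂μ :=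
        lintegral_mono_set hcover
    _ ≤ ∑' j : ℕ, ∫⁻ x in s ∩ g ⁻¹' Ico (j : ℝ) (j + 1), ENNReal.ofReal (exp (a - g x)) ∂μ :=
        lintegral_iUnion_le _ _
    _ ≤ ∑' j : ℕ, ∫⁻ _ in s ∩ g ⁻¹' Ico (j : ℝ) (j + 1), ENNReal.ofReal (exp (a - j)) ∂μ :=
        ENNReal.tsum_le_tsum fun j => setLIntegral_mono measurable_const fun x hx =>
          ENNReal.ofReal_le_ofReal (exp_le_exp.mpr (by linarith [hx.2.1]))
    _ ≤ ∑' j : ℕ, ENNReal.ofReal (exp (a - j)) * μ (s ∩ g ⁻¹' Iio (j + 1)) := by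
        refine ENNReal.tsum_le_tsum fun j => ?_
        rw [setLIntegral_const]
        gcongr
        exact fun x hx => hx.2

lemma summable_add_one_rpow_mul_exp_neg (p : ℝ) :
    Summable fun j : ℕ => ((j : ℝ) + 1) ^ p * exp (-j) := by
  have hpow := (_root_.summable_nat_add_iff 1).mpr (summable_pow_mul_exp_neg_nat_mul ⌈p⌉₊ one_pos)
  refine (hpow.mul_left (exp 1)).of_nonneg_of_le (fun j => by positivity) fun j => ?_
  have hj : (1 : ℝ) ≤ j + 1 := by linarith [j.cast_nonneg (α := ℝ)]
  calc ((j : ℝ) + 1) ^ p * exp (-j) ≤ ((j : ℝ) + 1) ^ (⌈p⌉₊ : ℝ) * exp (-j) := by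
        gcongr
        exact Nat.le_ceil p
    _ = exp 1 * (((j + 1 : ℕ) : ℝ) ^ ⌈p⌉₊ * exp (-1 * ((j + 1 : ℕ) : ℝ))) := by
        rw [rpow_natCast, mul_left_comm, ← exp_add]
        push_cast
        ring_nf

lemma exists_norm_eq_one_smul {E : Type*} [NormedAddCommGroup E] [NormedSpace ℝ E] [Nontrivial E]
    (x : E) : ∃ e : E, ‖e‖ = 1 ∧ x = ‖x‖ • e := by
  rcases eq_or_ne x 0 with rfl | hx
  · obtain ⟨e, he⟩ := exists_norm_eq E zero_le_one
    exact ⟨e, he, by simp⟩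
  · exact ⟨NormedSpace.normalize x, NormedSpace.norm_normalize hx,
      (NormedSpace.norm_smul_normalize x).symm⟩

lemma exists_le_setLIntegral_exp_inner (m : ℕ) : ∃ c : ℝ, 0 < c ∧
    ∀ (t : ℝ) (x : EuclideanSpace ℝ (Fin (m + 1))),
      ENNReal.ofReal (c * (1 + ‖x‖) ^ (-(m : ℝ) / 2) * exp (‖x‖ - t)) ≤
        ∫⁻ ω in sphere 0 1, ENNReal.ofReal (exp (⟪x, ω⟫ - t)) ∂μH[m] := by
  obtain ⟨k, hk, hcap⟩ := exists_le_hausdorffMeasure_sphereCap m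
  refine ⟨k * exp (-1), by positivity, fun t x => ?_⟩
  obtain ⟨e, he, hxe⟩ := exists_norm_eq_one_smul x
  set r := ‖x‖
  have hr : 0 ≤ r := norm_nonneg x
  set δ := (1 + r)⁻¹
  have hδ₀ : 0 < δ := by positivity
  have hδ₁ : δ ≤ 1 := inv_le_one_of_one_le₀ (by linarith)
  have hexp : ∀ ω ∈ sphereCap e δ, exp (r - 1 - t) ≤ exp (⟪x, ω⟫ - t) := by
    rintro ω ⟨-, hω⟩
    have hrδ : r * δ ≤ 1 := by
      rw [← div_eq_mul_inv, div_le_one (by linarith)]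
      linarith
    rw [hxe, real_inner_smul_left]
    exact exp_le_exp.mpr (by nlinarith)
  calc ENNReal.ofReal (k * exp (-1) * (1 + r) ^ (-(m : ℝ) / 2) * exp (r - t))
      = ENNReal.ofReal (exp (r - 1 - t)) * ENNReal.ofReal (k * δ ^ ((m : ℝ) / 2)) := by
        rw [← ENNReal.ofReal_mul (exp_pos _).le, inv_rpow (by linarith), ← rpow_neg (by linarith),
          neg_div, show r - 1 - t = r - t + -1 by ring, exp_add]
        ring_nf
    _ ≤ ENNReal.ofReal (exp (r - 1 - t)) * μH[m] (sphereCap e δ) := by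
        gcongr
        exact hcap e he δ hδ₀ hδ₁
    _ = ∫⁻ _ in sphereCap e δ, ENNReal.ofReal (exp (r - 1 - t)) ∂μH[m] :=
        (setLIntegral_const _ _).symm
    _ ≤ ∫⁻ ω in sphereCap e δ, ENNReal.ofReal (exp (⟪x, ω⟫ - t)) ∂μH[m] :=
        setLIntegral_mono (by fun_prop) fun ω hω => ENNReal.ofReal_le_ofReal (hexp ω hω)
    _ ≤ ∫⁻ ω in sphere 0 1, ENNReal.ofReal (exp (⟪x, ω⟫ - t)) ∂μH[m] :=
        lintegral_mono_set (sphereCap_subset_sphere e δ)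

lemma exists_setLIntegral_exp_inner_le (m : ℕ) : ∃ C : ℝ,
    ∀ (t : ℝ) (x : EuclideanSpace ℝ (Fin (m + 1))),
      ∫⁻ ω in sphere 0 1, ENNReal.ofReal (exp (⟪x, ω⟫ - t)) ∂μH[m] ≤
        ENNReal.ofReal (C * (1 + ‖x‖) ^ (-(m : ℝ) / 2) * exp (‖x‖ - t)) := by
  obtain ⟨K, hK, hcap⟩ := exists_hausdorffMeasure_sphereCap_le m
  set p := (m : ℝ) / 2 with hp
  set S := ∑' j : ℕ, ((j : ℝ) + 1) ^ p * exp (-j)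
  refine ⟨K * 3 ^ p * S, fun t x => ?_⟩
  obtain ⟨e, he, hxe⟩ := exists_norm_eq_one_smul x
  set r := ‖x‖
  have hr : 0 ≤ r := norm_nonneg x
  have hinner : ∀ ω ∈ sphere (0 : EuclideanSpace ℝ (Fin (m + 1))) 1,
      ⟪x, ω⟫ = r * ⟪e, ω⟫ ∧ -1 ≤ ⟪e, ω⟫ ∧ ⟪e, ω⟫ ≤ 1 := by
    intro ω hω
    have hCS := abs_real_inner_le_norm e ω
    rw [he, mem_sphere_zero_iff_norm.mp hω, one_mul] at hCS
    exact ⟨by rw [hxe, real_inner_smul_left], (abs_le.mp hCS).1, (abs_le.mp hCS).2⟩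
  -- `(1 + r)(1 - ⟪e, ω⟫) = r(1 - ⟪e, ω⟫) + (1 - ⟪e, ω⟫) < (j + 1) + 2`
  have hband : ∀ j : ℕ, sphere 0 1 ∩ (fun ω => r - ⟪x, ω⟫) ⁻¹' Iio ((j : ℝ) + 1) ⊆
      sphereCap e (3 * (j + 1) / (1 + r)) := by
    rintro j ω ⟨hω, hj⟩
    obtain ⟨hxω, hlow, -⟩ := hinner ω hω
    refine ⟨hω, ?_⟩
    rw [mem_preimage, mem_Iio, hxω] at hj
    rw [sub_le_comm, le_div_iff₀ (by linarith)]
    nlinarith [j.cast_nonneg (α := ℝ)]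
  have hterm : ∀ j : ℕ, exp (r - t - j) * (K * (3 * (j + 1) / (1 + r)) ^ p) =
      K * 3 ^ p * (1 + r) ^ (-p) * exp (r - t) * (((j : ℝ) + 1) ^ p * exp (-j)) := by
    intro j
    rw [div_rpow (by positivity) (by linarith), mul_rpow (by norm_num) (by positivity),
      rpow_neg (by linarith), sub_eq_add_neg (r - t), exp_add]
    field_simp
  calc ∫⁻ ω in sphere 0 1, ENNReal.ofReal (exp (⟪x, ω⟫ - t)) ∂μH[m]
      = ∫⁻ ω in sphere 0 1, ENNReal.ofReal (exp ((r - t) - (r - ⟪x, ω⟫))) ∂μH[m] := by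
        simp_rw [sub_sub_sub_cancel_left]
    _ ≤ ∑' j : ℕ, ENNReal.ofReal (exp (r - t - j)) *
          μH[m] (sphere 0 1 ∩ (fun ω => r - ⟪x, ω⟫) ⁻¹' Iio ((j : ℝ) + 1)) :=
        setLIntegral_ofReal_exp_sub_le_tsum _ (fun ω hω => by
          obtain ⟨hxω, -, hup⟩ := hinner ω hω
          rw [hxω]
          nlinarith) _
    _ ≤ ∑' j : ℕ, ENNReal.ofReal (exp (r - t - j) * (K * (3 * (j + 1) / (1 + r)) ^ p)) := by
        refine ENNReal.tsum_le_tsum fun j => ?_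
        rw [ENNReal.ofReal_mul (exp_pos _).le]
        gcongr
        exact (measure_mono (hband j)).trans (hcap e he _ (by positivity))
    _ = ENNReal.ofReal (K * 3 ^ p * (1 + r) ^ (-p) * exp (r - t) * S) := by
        simp_rw [hterm]
        rw [← ENNReal.ofReal_tsum_of_nonneg (fun j => by positivity)
          ((summable_add_one_rpow_mul_exp_neg p).mul_left _), tsum_mul_left]
    _ = ENNReal.ofReal (K * 3 ^ p * S * (1 + r) ^ (-(m : ℝ) / 2) * exp (r - t)) := by
        rw [neg_div, ← hp]
        congr 1
        ring

lemma phiFn_eq_toReal_lintegral (n : ℕ) (t : ℝ) (x : EuclideanSpace ℝ (Fin n)) :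
    phiFn n t x =
      (∫⁻ ω in sphere 0 1, ENNReal.ofReal (exp (⟪x, ω⟫ - t)) ∂μH[(n : ℝ) - 1]).toReal :=
  integral_eq_lintegral_of_nonneg_ae (ae_of_all _ fun _ => (exp_pos _).le)
    (by fun_prop : Continuous fun ω => exp (⟪x, ω⟫ - t)).aestronglyMeasurable

theorem stmt1 (n : ℕ) (hn : 2 ≤ n) :
    ∃ c C : ℝ, 0 < c ∧ c ≤ C ∧
      ∀ (t : ℝ) (x : EuclideanSpace ℝ (Fin n)),
        c * (1 + ‖x‖) ^ (-((n : ℝ) - 1) / 2) * Real.exp (‖x‖ - t) ≤ phiFn n t x ∧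
        phiFn n t x ≤ C * (1 + ‖x‖) ^ (-((n : ℝ) - 1) / 2) * Real.exp (‖x‖ - t) := by
  obtain ⟨m, rfl⟩ : ∃ m, n = m + 1 := ⟨n - 1, by omega⟩
  obtain ⟨c, hc, hlower⟩ := exists_le_setLIntegral_exp_inner m
  obtain ⟨C, hupper⟩ := exists_setLIntegral_exp_inner_le m
  have hdim : ((m + 1 : ℕ) : ℝ) - 1 = m := by push_cast; ring
  refine ⟨c, max c C, hc, le_max_left c C, fun t x => ?_⟩
  rw [phiFn_eq_toReal_lintegral, hdim]
  have hfinite := ne_top_of_le_ne_top ENNReal.ofReal_ne_top (hupper t x)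
  refine ⟨(ENNReal.ofReal_le_iff_le_toReal hfinite).mp (hlower t x),
    ENNReal.toReal_le_of_le_ofReal (by positivity) ((hupper t x).trans ?_)⟩
  gcongr
  exact le_max_right c C
end

section
/- For r ≥ 1 and n ≥ 2, the integral ∫_0^{π/2} e^{r(cos θ − 1)} r^{(n-1)/2} (sin θ)^{n-2} dθ is bounded above by (π/2)^{n-1} ∫_0^∞ e^{−θ²/2} θ^{n-2} dθ and bounded below by (2/π)^{n-2} ∫_0^{π√r/2} e^{−θ²/2} θ^{n-2} dθ. -/
/-!
Write `r = s²`. On `[0, π/2]` the two elementary bounds `2θ²/π² ≤ 1 - cos θ ≤ θ²/2` squeeze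
`e^{s²(cos θ - 1)}` between the Gaussians `e^{-(2sθ/π)²/2}` and `e^{-(sθ)²/2}`, while
`2θ/π ≤ sin θ ≤ θ`. After these pointwise comparisons, the linear substitutions `u = 2sθ/π`
and `u = sθ` turn both sides into truncated Gaussian moments `∫₀^b e^{-u²/2} uᵐ du`; the
truncation at `b = s` is then dropped in the upper bound.
-/

open Real MeasureTheory

lemma integral_exp_neg_sq_mul_pow_comp_mul (m : ℕ) (c b : ℝ) :
    ∫ θ in (0:ℝ)..b, exp (-(c * θ) ^ 2 / 2) * θ ^ m * c ^ (m + 1)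
      = ∫ u in (0:ℝ)..c * b, exp (-u ^ 2 / 2) * u ^ m := by
  have h := intervalIntegral.mul_integral_comp_mul_left (a := 0) (b := b)
    (f := fun u => exp (-u ^ 2 / 2) * u ^ m) (c := c)
  rw [mul_zero] at h
  rw [← h, ← intervalIntegral.integral_const_mul]
  congr 1 with θ
  ring

lemma integrableOn_exp_neg_sq_mul_pow_Ioi (m : ℕ) :
    IntegrableOn (fun u : ℝ => exp (-u ^ 2 / 2) * u ^ m) (Set.Ioi 0) := by
  refine (integrableOn_rpow_mul_exp_neg_mul_sq (b := 1 / 2) (by norm_num)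
    (s := m) (by linarith [(Nat.cast_nonneg m : (0:ℝ) ≤ m)])).congr_fun
    (fun u _ => ?_) measurableSet_Ioi
  simp only [rpow_natCast]
  ring_nf

lemma intervalIntegral_exp_neg_sq_mul_pow_le_integral_Ioi (m : ℕ) {b : ℝ} (hb : 0 ≤ b) :
    ∫ u in (0:ℝ)..b, exp (-u ^ 2 / 2) * u ^ m
      ≤ ∫ u in Set.Ioi (0:ℝ), exp (-u ^ 2 / 2) * u ^ m := by
  rw [intervalIntegral.integral_of_le hb]
  refine setIntegral_mono_set (integrableOn_exp_neg_sq_mul_pow_Ioi m) ?_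
    Set.Ioc_subset_Ioi_self.eventuallyLE
  filter_upwards [ae_restrict_mem measurableSet_Ioi] with u (hu : 0 < u)
  positivity

lemma sq_mul_cos_sub_one_le (s : ℝ) {θ : ℝ} (hθ : |θ| ≤ π) :
    s ^ 2 * (cos θ - 1) ≤ -(2 * s / π * θ) ^ 2 / 2 := by
  have hcos := cos_le_one_sub_mul_cos_sq hθ
  have hπ := pi_pos.ne'
  calc s ^ 2 * (cos θ - 1) ≤ s ^ 2 * (-(2 / π ^ 2 * θ ^ 2)) := by gcongr; linarith
    _ = -(2 * s / π * θ) ^ 2 / 2 := by field_simp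

lemma neg_sq_div_two_le_sq_mul_cos_sub_one (s θ : ℝ) :
    -(s * θ) ^ 2 / 2 ≤ s ^ 2 * (cos θ - 1) := by
  have hcos := one_sub_sq_div_two_le_cos (x := θ)
  nlinarith [sq_nonneg s]

section

variable (m : ℕ) {s : ℝ} (hs : 0 ≤ s)
include hs

lemma exp_mul_cos_sub_one_mul_sin_pow_le {θ : ℝ} (hθ : θ ∈ Set.Icc 0 (π / 2)) :
    exp (s ^ 2 * (cos θ - 1)) * s ^ (m + 1) * sin θ ^ m
      ≤ (π / 2) ^ (m + 1) * (exp (-(2 * s / π * θ) ^ 2 / 2) * θ ^ m * (2 * s / π) ^ (m + 1)) := by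
  obtain ⟨hθ₀, hθ₁⟩ := hθ
  have hexp := exp_le_exp.mpr (sq_mul_cos_sub_one_le s (θ := θ)
    (by rw [abs_of_nonneg hθ₀]; linarith [pi_pos]))
  have hsin₀ : 0 ≤ sin θ := sin_nonneg_of_nonneg_of_le_pi hθ₀ (by linarith [pi_pos])
  have hsin : sin θ ^ m ≤ θ ^ m := pow_le_pow_left₀ hsin₀ (sin_le hθ₀) m
  have hscale : (π / 2) ^ (m + 1) * (2 * s / π) ^ (m + 1) = s ^ (m + 1) := by
    rw [← mul_pow]; field_simp [pi_pos.ne']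
  calc exp (s ^ 2 * (cos θ - 1)) * s ^ (m + 1) * sin θ ^ m
      ≤ exp (-(2 * s / π * θ) ^ 2 / 2) * s ^ (m + 1) * θ ^ m := by gcongr
    _ = _ := by rw [← hscale]; ring

lemma exp_neg_sq_mul_pow_le_exp_mul_cos_sub_one_mul_sin_pow {θ : ℝ}
    (hθ : θ ∈ Set.Icc 0 (π / 2)) :
    (2 / π) ^ m * (exp (-(s * θ) ^ 2 / 2) * θ ^ m * s ^ (m + 1))
      ≤ exp (s ^ 2 * (cos θ - 1)) * s ^ (m + 1) * sin θ ^ m := by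
  obtain ⟨hθ₀, hθ₁⟩ := hθ
  have hexp := exp_le_exp.mpr (neg_sq_div_two_le_sq_mul_cos_sub_one s θ)
  have hsin : (2 / π * θ) ^ m ≤ sin θ ^ m :=
    pow_le_pow_left₀ (by positivity) (mul_le_sin hθ₀ hθ₁) m
  calc (2 / π) ^ m * (exp (-(s * θ) ^ 2 / 2) * θ ^ m * s ^ (m + 1))
      = exp (-(s * θ) ^ 2 / 2) * s ^ (m + 1) * (2 / π * θ) ^ m := by ring
    _ ≤ _ := by gcongr

lemma integral_exp_mul_cos_sub_one_mul_sin_pow_le :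
    ∫ θ in (0:ℝ)..π / 2, exp (s ^ 2 * (cos θ - 1)) * s ^ (m + 1) * sin θ ^ m
      ≤ (π / 2) ^ (m + 1) * ∫ u in (0:ℝ)..s, exp (-u ^ 2 / 2) * u ^ m := by
  calc _ ≤ ∫ θ in (0:ℝ)..π / 2,
          (π / 2) ^ (m + 1) * (exp (-(2 * s / π * θ) ^ 2 / 2) * θ ^ m * (2 * s / π) ^ (m + 1)) :=
        intervalIntegral.integral_mono_on (by positivity)
          (Continuous.intervalIntegrable (by fun_prop) _ _)
          (Continuous.intervalIntegrable (by fun_prop) _ _)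
          fun θ hθ => exp_mul_cos_sub_one_mul_sin_pow_le m hs hθ
    _ = _ := by
      rw [intervalIntegral.integral_const_mul, integral_exp_neg_sq_mul_pow_comp_mul]
      field_simp [pi_pos.ne']

lemma le_integral_exp_mul_cos_sub_one_mul_sin_pow :
    (2 / π) ^ m * ∫ u in (0:ℝ)..s * (π / 2), exp (-u ^ 2 / 2) * u ^ m
      ≤ ∫ θ in (0:ℝ)..π / 2, exp (s ^ 2 * (cos θ - 1)) * s ^ (m + 1) * sin θ ^ m := by
  rw [← integral_exp_neg_sq_mul_pow_comp_mul, ← intervalIntegral.integral_const_mul]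
  exact intervalIntegral.integral_mono_on (by positivity)
    (Continuous.intervalIntegrable (by fun_prop) _ _)
    (Continuous.intervalIntegrable (by fun_prop) _ _)
    fun θ hθ => exp_neg_sq_mul_pow_le_exp_mul_cos_sub_one_mul_sin_pow m hs hθ

end

theorem stmt3 (n : ℕ) (hn : 2 ≤ n) (r : ℝ) (hr : 1 ≤ r) :
    (∫ θ in (0:ℝ)..(π/2),
        Real.exp (r * (Real.cos θ - 1)) * r ^ (((n : ℝ) - 1) / 2) * Real.sin θ ^ (n - 2))
      ≤ (π / 2) ^ (n - 1) * ∫ θ in Set.Ioi (0:ℝ), Real.exp (-θ ^ 2 / 2) * θ ^ (n - 2) ∧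
    (2 / π) ^ (n - 2) *
        (∫ θ in (0:ℝ)..(π * Real.sqrt r / 2), Real.exp (-θ ^ 2 / 2) * θ ^ (n - 2))
      ≤ ∫ θ in (0:ℝ)..(π/2),
          Real.exp (r * (Real.cos θ - 1)) * r ^ (((n : ℝ) - 1) / 2) * Real.sin θ ^ (n - 2) := by
  obtain ⟨m, rfl⟩ : ∃ m, n = m + 2 := ⟨n - 2, by omega⟩
  obtain ⟨s, hs, rfl⟩ : ∃ s, 0 ≤ s ∧ r = s ^ 2 := ⟨√r, sqrt_nonneg r, (sq_sqrt (by linarith)).symm⟩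
  have hpow : (s ^ 2) ^ ((((m + 2 : ℕ) : ℝ) - 1) / 2) = s ^ (m + 1) := by
    rw [← rpow_natCast s 2, ← rpow_mul hs, ← rpow_natCast]
    push_cast; ring_nf
  simp only [hpow, sqrt_sq hs, Nat.add_sub_cancel, show m + 2 - 1 = m + 1 by omega]
  refine ⟨(integral_exp_mul_cos_sub_one_mul_sin_pow_le m hs).trans ?_, ?_⟩
  · exact mul_le_mul_of_nonneg_left
      (intervalIntegral_exp_neg_sq_mul_pow_le_integral_Ioi m hs) (by positivity)
  · simpa only [mul_comm π, mul_div_assoc] using le_integral_exp_mul_cos_sub_one_mul_sin_pow m hs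
end
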